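/- arXiv:2603.08634 — 2 statements merged into one kernel-verified Lean document; each statement's English description precedes it below -/
import Mathlib

section
/- Let (Ω, F, P) be a probability space, let Z be a random variable taking values in a measurable space, and let ε_{ij}, ε_{hk}, ε_{ik}, ε_{jh} be real random variables such that the random vector (ε_{ij}, ε_{hk}, ε_{ik}, ε_{jh}) is independent of the σ-algebra σ(Z) generated by Z. Let A_i, A_j, A_h, A_k and δ_{ij}, δ_{hk}, δ_{ik}, δ_{jh} be arbitrary real random variables, and define Y_{ab} := 1{A_a + A_b + ε_{ab} ≤ δ_{ab}}. Then for every c ∈ ℝ, almost surely, E[ (1 − Y_{ij}) (1 − Y_{hk}) Y_{ik} Y_{jh} · 1{δ_{ij} + δ_{hk} − δ_{ik} − δ_{jh} > c} | σ(Z) ] ≤ 1 − P(ε_{ij} + ε_{hk} − ε_{ik} − ε_{jh} ≤ c). -/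
/-!
On the tetrad event where `ij`, `hk` are not linked but `ik`, `jh` are, adding the four
defining inequalities cancels the fixed effects and gives `Δδ < Δε`; so the integrand is
dominated by `1{c < Δε}`. This indicator is a function of the shocks alone, which are
independent of `Z`, so its conditional expectation given `σ(Z)` is the constant
`P(Δε > c) = 1 - P(Δε ≤ c)`.
-/

open MeasureTheory ProbabilityTheory

section CondExp

variable {Ω : Type*} {m m₀ : MeasurableSpace Ω} {μ : Measure Ω}

theorem condExp_mono_of_nonneg {f g : Ω → ℝ} (hg : Integrable g μ) (hg₀ : 0 ≤ᵐ[μ] g)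
    (hfg : f ≤ᵐ[μ] g) : μ[f | m] ≤ᵐ[μ] μ[g | m] := by
  by_cases hf : Integrable f μ
  · exact condExp_mono hf hg hfg
  · rw [condExp_of_not_integrable hf]
    exact condExp_nonneg hg₀

theorem condExp_indicator_preimage_of_indepFun [IsFiniteMeasure μ] {α β : Type*}
    [mα : MeasurableSpace α] [mβ : MeasurableSpace β] {X : Ω → α} {Z : Ω → β}
    (hX : Measurable X) (hZ : Measurable Z) (hXZ : IndepFun X Z μ) {S : Set α}
    (hS : MeasurableSet S) :
    μ[(X ⁻¹' S).indicator 1 | mβ.comap Z] =ᵐ[μ] fun _ => μ.real (X ⁻¹' S) := by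
  have hmeas : StronglyMeasurable[mα.comap X] ((X ⁻¹' S).indicator (1 : Ω → ℝ)) :=
    stronglyMeasurable_const.indicator ⟨S, hS, rfl⟩
  have h := condExp_indep_eq hX.comap_le hZ.comap_le hmeas ((IndepFun_iff_Indep X Z μ).mp hXZ)
  rwa [integral_indicator_one (hX hS)] at h

end CondExp

theorem tetrad_difference_lt_of_links {Ai Aj Ah Ak εij εhk εik εjh δij δhk δik δjh : ℝ}
    (hij : δij < Ai + Aj + εij) (hhk : δhk < Ah + Ak + εhk)
    (hik : Ai + Ak + εik ≤ δik) (hjh : Aj + Ah + εjh ≤ δjh) :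
    δij + δhk - δik - δjh < εij + εhk - εik - εjh := by
  linarith

theorem tetrad_indicator_le {Ai Aj Ah Ak εij εhk εik εjh δij δhk δik δjh : ℝ} (c : ℝ) :
    (1 - if Ai + Aj + εij ≤ δij then (1 : ℝ) else 0) *
        (1 - if Ah + Ak + εhk ≤ δhk then (1 : ℝ) else 0) *
        (if Ai + Ak + εik ≤ δik then (1 : ℝ) else 0) *
        (if Aj + Ah + εjh ≤ δjh then (1 : ℝ) else 0) *
        (if c < δij + δhk - δik - δjh then (1 : ℝ) else 0)
      ≤ if c < εij + εhk - εik - εjh then (1 : ℝ) else 0 := by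
  split_ifs <;> norm_num
  rename_i hij hhk hik hjh hδ hΔε
  exact hΔε (hδ.trans (tetrad_difference_lt_of_links (not_le.mp hij) (not_le.mp hhk) hik hjh))

theorem tetrad_condexp_upper_bound_general
    {Ω : Type*} [MeasurableSpace Ω] (P : Measure Ω) [IsProbabilityMeasure P]
    {β : Type*} [MeasurableSpace β] (Z : Ω → β) (hZ : Measurable Z)
    (εij εhk εik εjh : Ω → ℝ)
    (hεij : Measurable εij) (hεhk : Measurable εhk)
    (hεik : Measurable εik) (hεjh : Measurable εjh)
    (hindep : IndepFun (fun ω => (εij ω, εhk ω, εik ω, εjh ω)) Z P)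
    (Ai Aj Ah Ak δij δhk δik δjh : Ω → ℝ)
    (Yij Yhk Yik Yjh : Ω → ℝ)
    (hYij : Yij = fun ω => if Ai ω + Aj ω + εij ω ≤ δij ω then (1 : ℝ) else 0)
    (hYhk : Yhk = fun ω => if Ah ω + Ak ω + εhk ω ≤ δhk ω then (1 : ℝ) else 0)
    (hYik : Yik = fun ω => if Ai ω + Ak ω + εik ω ≤ δik ω then (1 : ℝ) else 0)
    (hYjh : Yjh = fun ω => if Aj ω + Ah ω + εjh ω ≤ δjh ω then (1 : ℝ) else 0)
    (c : ℝ) :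
    ∀ᵐ ω ∂P,
      (P[fun ω => (1 - Yij ω) * (1 - Yhk ω) * Yik ω * Yjh ω *
            (if c < δij ω + δhk ω - δik ω - δjh ω then (1 : ℝ) else 0)
          | MeasurableSpace.comap Z inferInstance]) ω
        ≤ 1 - (P {ω | εij ω + εhk ω - εik ω - εjh ω ≤ c}).toReal := by
  subst hYij hYhk hYik hYjh
  let ε : Ω → ℝ × ℝ × ℝ × ℝ := fun ω => (εij ω, εhk ω, εik ω, εjh ω)
  have hε : Measurable ε := hεij.prodMk (hεhk.prodMk (hεik.prodMk hεjh))
  let S : Set (ℝ × ℝ × ℝ × ℝ) := {e | c < e.1 + e.2.1 - e.2.2.1 - e.2.2.2}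
  have hS : MeasurableSet S := measurableSet_lt measurable_const (by fun_prop)
  have hprob : P.real (ε ⁻¹' S) = 1 - (P {ω | εij ω + εhk ω - εik ω - εjh ω ≤ c}).toReal := by
    have hcompl : ε ⁻¹' S = {ω | εij ω + εhk ω - εik ω - εjh ω ≤ c}ᶜ := by
      ext ω
      simp only [Set.mem_preimage, Set.mem_ofPred_eq, Set.mem_compl_iff, not_le, ε, S]
    rw [hcompl, probReal_compl_eq_one_sub (measurableSet_le (by fun_prop) measurable_const),
      measureReal_def]
  rw [← hprob]
  refine (condExp_mono_of_nonneg ((integrable_const 1).indicator (hε hS))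
    (.of_forall fun _ => Set.indicator_nonneg (fun _ _ => zero_le_one) _)
    (.of_forall fun ω => (tetrad_indicator_le c).trans_eq ?_)).trans
    (condExp_indicator_preimage_of_indepFun hε hZ hindep hS).le
  simp [Set.indicator_apply, ε, S]

/-- Conditional upper-bound tetrad restriction (bound_U): the conditional
expectation given `σ(Z)` of the flipped tetrad-event indicator intersected
with `{Δδ > c}` is a.s. bounded by `1 - P(Δε ≤ c)`, provided the shock
vector is independent of `Z`. -/
theorem tetrad_condexp_upper_bound
    {Ω : Type*} [MeasurableSpace Ω] (P : Measure Ω) [IsProbabilityMeasure P]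
    {β : Type*} [MeasurableSpace β] (Z : Ω → β) (hZ : Measurable Z)
    (εij εhk εik εjh : Ω → ℝ)
    (hεij : Measurable εij) (hεhk : Measurable εhk)
    (hεik : Measurable εik) (hεjh : Measurable εjh)
    (hindep : IndepFun (fun ω => (εij ω, εhk ω, εik ω, εjh ω)) Z P)
    (Ai Aj Ah Ak δij δhk δik δjh : Ω → ℝ)
    (hAi : Measurable Ai) (hAj : Measurable Aj)
    (hAh : Measurable Ah) (hAk : Measurable Ak)
    (hδij : Measurable δij) (hδhk : Measurable δhk)
    (hδik : Measurable δik) (hδjh : Measurable δjh)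
    (Yij Yhk Yik Yjh : Ω → ℝ)
    (hYij : Yij = fun ω => if Ai ω + Aj ω + εij ω ≤ δij ω then (1 : ℝ) else 0)
    (hYhk : Yhk = fun ω => if Ah ω + Ak ω + εhk ω ≤ δhk ω then (1 : ℝ) else 0)
    (hYik : Yik = fun ω => if Ai ω + Ak ω + εik ω ≤ δik ω then (1 : ℝ) else 0)
    (hYjh : Yjh = fun ω => if Aj ω + Ah ω + εjh ω ≤ δjh ω then (1 : ℝ) else 0)
    (c : ℝ) :
    ∀ᵐ ω ∂P,
      (P[fun ω => (1 - Yij ω) * (1 - Yhk ω) * Yik ω * Yjh ω *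
            (if c < δij ω + δhk ω - δik ω - δjh ω then (1 : ℝ) else 0)
          | MeasurableSpace.comap Z inferInstance]) ω
        ≤ 1 - (P {ω | εij ω + εhk ω - εik ω - εjh ω ≤ c}).toReal :=
  tetrad_condexp_upper_bound_general P Z hZ εij εhk εik εjh hεij hεhk hεik hεjh hindep Ai Aj Ah Ak
    δij δhk δik δjh Yij Yhk Yik Yjh hYij hYhk hYik hYjh c
end

section
/- Let A_i, A_j, A_k, A_ℓ, ε_{ij}, ε_{ik}, ε_{iℓ}, δ_{ij}, δ_{ik}, δ_{iℓ}, and c be real numbers. For each pair (a,b) set v_{ab} := A_a + A_b + ε_{ab} and Y_{ab} := 1 if v_{ab} ≤ δ_{ab} and Y_{ab} := 0 otherwise. Then (i) v_{ij} + v_{ik} − 2·v_{iℓ} = (A_j + ε_{ij}) + (A_k + ε_{ik}) − 2·(A_ℓ + ε_{iℓ}) (the hub agent's fixed effect A_i cancels); (ii) Y_{ij} · Y_{ik} · (1 − Y_{iℓ}) · 1{δ_{ij} + δ_{ik} − 2δ_{iℓ} ≤ c} ≤ 1{(A_j + ε_{ij}) + (A_k + ε_{ik}) − 2(A_ℓ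 + ε_{iℓ}) ≤ c}; and (iii) (1 − Y_{ij}) · (1 − Y_{ik}) · Y_{iℓ} · 1{δ_{ij} + δ_{ik} − 2δ_{iℓ} > c} ≤ 1{(A_j + ε_{ij}) + (A_k + ε_{ik}) − 2(A_ℓ + ε_{iℓ}) > c}. -/
/-! With weights `(+1, +1, −2)` on the links `ij, ik, iℓ` the hub `i` appears with total weight
zero, so `A_i` cancels from the weighted sum of latent indices. If `ij` and `ik` form while `iℓ`
does not, then `v_{ij} ≤ δ_{ij}`, `v_{ik} ≤ δ_{ik}` and `v_{iℓ} > δ_{iℓ}`, so the weighted sum of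
the `v`'s lies strictly below that of the `δ`'s and a threshold `c` on the `δ`-side transfers to
the `A_i`-free side. Reversing all three link outcomes reverses the inequality. -/

section Indicator

variable {R : Type*}

lemma one_sub_ite_one_zero [Ring R] (p : Prop) [Decidable p] :
    (1 : R) - (if p then 1 else 0) = if ¬p then 1 else 0 := by
  split_ifs <;> simp

lemma ite_one_zero_le_of_imp [Zero R] [One R] [PartialOrder R] [ZeroLEOneClass R]
    {p q : Prop} [Decidable p] [Decidable q] (h : p → q) :
    (if p then (1 : R) else 0) ≤ if q then 1 else 0 := by
  split_ifs with hp hq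
  · exact le_rfl
  · exact absurd (h hp) hq
  · exact zero_le_one
  · exact le_rfl

end Indicator

section Star

variable {R : Type*}

lemma star_weighted_sum_hub_cancel [CommRing R] (a x₁ x₂ x₃ e₁ e₂ e₃ : R) :
    (a + x₁ + e₁) + (a + x₂ + e₂) - 2 * (a + x₃ + e₃) = (x₁ + e₁) + (x₂ + e₂) - 2 * (x₃ + e₃) := by
  ring

variable [CommRing R] [LinearOrder R] [IsStrictOrderedRing R] {v₁ v₂ v₃ d₁ d₂ d₃ : R}

lemma star_weighted_sum_lt (h₁ : v₁ ≤ d₁) (h₂ : v₂ ≤ d₂) (h₃ : d₃ < v₃) :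
    v₁ + v₂ - 2 * v₃ < d₁ + d₂ - 2 * d₃ := by
  linarith

lemma star_weighted_sum_gt (h₁ : d₁ < v₁) (h₂ : d₂ < v₂) (h₃ : v₃ ≤ d₃) :
    d₁ + d₂ - 2 * d₃ < v₁ + v₂ - 2 * v₃ := by
  linarith

end Star

/-- Pointwise weighted-differencing bound within a tetrad `(i,j,k,ℓ)`:
the star configuration on links `(ij, ik, iℓ)` with weights `(+1,+1,−2)`
gives the hub agent `i` incidence load zero, so `A_i` is differenced out
while `A_j, A_k, A_ℓ` are retained. -/
theorem weighted_star_pointwise_bound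
    (Ai Aj Ak Al εij εik εil δij δik δil c : ℝ)
    (vij vik vil : ℝ)
    (hvij : vij = Ai + Aj + εij) (hvik : vik = Ai + Ak + εik)
    (hvil : vil = Ai + Al + εil)
    (Yij Yik Yil : ℝ)
    (hYij : Yij = if vij ≤ δij then (1 : ℝ) else 0)
    (hYik : Yik = if vik ≤ δik then (1 : ℝ) else 0)
    (hYil : Yil = if vil ≤ δil then (1 : ℝ) else 0) :
    vij + vik - 2 * vil = (Aj + εij) + (Ak + εik) - 2 * (Al + εil) ∧
    Yij * Yik * (1 - Yil) * (if δij + δik - 2 * δil ≤ c then (1 : ℝ) else 0)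
      ≤ (if (Aj + εij) + (Ak + εik) - 2 * (Al + εil) ≤ c then (1 : ℝ) else 0) ∧
    (1 - Yij) * (1 - Yik) * Yil * (if c < δij + δik - 2 * δil then (1 : ℝ) else 0)
      ≤ (if c < (Aj + εij) + (Ak + εik) - 2 * (Al + εil) then (1 : ℝ) else 0) := by
  have hub := star_weighted_sum_hub_cancel Ai Aj Ak Al εij εik εil
  subst hvij hvik hvil hYij hYik hYil
  refine ⟨hub, ?_, ?_⟩
  · simp only [one_sub_ite_one_zero, ite_zero_mul_ite_zero, mul_one]
    refine ite_one_zero_le_of_imp fun ⟨⟨⟨hj, hk⟩, hl⟩, hc⟩ => ?_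
    rw [← hub]
    exact (star_weighted_sum_lt hj hk (not_le.mp hl)).le.trans hc
  · simp only [one_sub_ite_one_zero, ite_zero_mul_ite_zero, mul_one]
    refine ite_one_zero_le_of_imp fun ⟨⟨⟨hj, hk⟩, hl⟩, hc⟩ => ?_
    rw [← hub]
    exact hc.trans (star_weighted_sum_gt (not_le.mp hj) (not_le.mp hk) hl)
end
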